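/- Let B=(B_t)_{t≥0} be a standard Brownian motion starting at 0, w>0, W^w_t = w + B_t - t, τ^w = inf{t>0 : W^w_t ≤ 0}, and S^w_t = e^{t∧τ^w}. Then for every δ>0 and every stopping time σ (of the augmented Brownian filtration) with P[σ < τ^w] > 0, one has P[σ < τ^w and τ^w - σ < δ] > 0; consequently S^w satisfies the stickiness property: for any ε>0 and any stopping time σ with P[σ<∞]>0, conditionally on {σ<∞}, the set of paths for which (S^w_t)_{t≥σ} does not leave the corridor [S^w_σ/(1+ε), (1+ε)S^w_σ] has strictly positive probability. -/

import Mathlib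

open MeasureTheory Filter Set
open scoped ENNReal NNReal Topology

noncomputable section

namespace CSY

variable {Ω : Type*} [MeasurableSpace Ω]

/-- A process is adapted to the family of σ-algebras `F` on the time set `I`. -/
def AdaptedOn (F : ℝ → MeasurableSpace Ω) (I : Set ℝ) (f : ℝ → Ω → ℝ) : Prop :=
  ∀ t ∈ I, Measurable[F t] (f t)

/-- Martingale on the time set `I` with respect to the σ-algebra family `F`. -/
def MartOn (F : ℝ → MeasurableSpace Ω) (P : Measure Ω) (I : Set ℝ) (f : ℝ → Ω → ℝ) : Prop :=
  AdaptedOn F I f ∧ (∀ t ∈ I, Integrable (f t) P) ∧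
    ∀ s ∈ I, ∀ t ∈ I, s ≤ t → P[f t|F s] =ᵐ[P] f s

/-- Supermartingale on the time set `I`. -/
def SupermartOn (F : ℝ → MeasurableSpace Ω) (P : Measure Ω) (I : Set ℝ) (f : ℝ → Ω → ℝ) : Prop :=
  AdaptedOn F I f ∧ (∀ t ∈ I, Integrable (f t) P) ∧
    ∀ s ∈ I, ∀ t ∈ I, s ≤ t → P[f t|F s] ≤ᵐ[P] f s

/-- Stopping time (real-valued) with respect to `F`. -/
def IsStopT (F : ℝ → MeasurableSpace Ω) (τ : Ω → ℝ) : Prop :=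
  ∀ t : ℝ, MeasurableSet[F t] {ω | τ ω ≤ t}

/-- Stopping time with values in the extended reals. -/
def IsStopTE (F : ℝ → MeasurableSpace Ω) (τ : Ω → EReal) : Prop :=
  ∀ t : ℝ, MeasurableSet[F t] {ω | τ ω ≤ (t : EReal)}

/-- Stopped process. -/
def stopProc (f : ℝ → Ω → ℝ) (τ : Ω → ℝ) : ℝ → Ω → ℝ := fun t ω => f (min t (τ ω)) ω

/-- A localizing sequence of stopping times: increasing to `+∞`. -/
def IsLocSeq (F : ℝ → MeasurableSpace Ω) (σ : ℕ → Ω → ℝ) : Prop :=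
  (∀ n, IsStopT F (σ n)) ∧ (∀ ω, Monotone fun n => σ n ω) ∧
    ∀ ω, Tendsto (fun n => σ n ω) atTop atTop

/-- Local martingale on the time set `I`. -/
def LocMartOn (F : ℝ → MeasurableSpace Ω) (P : Measure Ω) (I : Set ℝ) (f : ℝ → Ω → ℝ) : Prop :=
  ∃ σ : ℕ → Ω → ℝ, IsLocSeq F σ ∧ ∀ n, MartOn F P I (stopProc f (σ n))

/-- Uniform integrability of the family `(f t)_{t ∈ I}`. -/
def UIFamilyOn (P : Measure Ω) (I : Set ℝ) (f : ℝ → Ω → ℝ) : Prop :=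
  ∀ ε > (0 : ℝ), ∃ C : ℝ, ∀ t ∈ I, ∫ ω in {ω | C ≤ |f t ω|}, |f t ω| ∂P ≤ ε

/-- Càdlàg (right-continuous with finite left limits) path on the time set `I`. -/
def Cadlag (I : Set ℝ) (g : ℝ → ℝ) : Prop :=
  (∀ t ∈ I, ContinuousWithinAt g (I ∩ Ici t) t) ∧
    ∀ t ∈ I, ∃ l : ℝ, Tendsto g (nhdsWithin t (I ∩ Iio t)) (nhds l)

/-- The (Lebesgue–)Stieltjes measure associated to a nondecreasing right-continuous function,
used for pathwise Riemann–Stieltjes integrals. -/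
def rsMeasure (g : ℝ → ℝ) : Measure ℝ := by
  classical
  exact if h : Monotone g ∧ ∀ x, ContinuousWithinAt g (Ici x) x then
    StieltjesFunction.measure ⟨g, h.1, h.2⟩
  else 0

/-- Liquidation value of a position `(φ0, φ1)` under proportional transaction costs `lam`. -/
def Vliq (S : ℝ → Ω → ℝ) (lam : ℝ) (φ0 φ1 : ℝ → Ω → ℝ) (t : ℝ) (ω : Ω) : ℝ :=
  φ0 t ω + max (φ1 t ω) 0 * ((1 - lam) * S t ω) - max (-φ1 t ω) 0 * S t ω

/-- A self-financing trading strategy under proportional transaction costs `lam` for the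
price process `S`, on the time set `I`, starting from the initial endowment
`(φ0_{0-}, φ1_{0-}) = (a, b)`.  The holdings are optional (adapted and càdlàg) finite
variation processes, `up`/`dn` are the components of the Jordan–Hahn decomposition of `φ1`,
and the self-financing condition is expressed via pathwise Riemann–Stieltjes integrals. -/
structure Strategy (F : ℝ → MeasurableSpace Ω) (I : Set ℝ) (S : ℝ → Ω → ℝ)
    (lam a b : ℝ) where
  φ0 : ℝ → Ω → ℝ
  φ1 : ℝ → Ω → ℝ
  up : ℝ → Ω → ℝ
  dn : ℝ → Ω → ℝ
  adapted0 : AdaptedOn F I φ0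
  adapted1 : AdaptedOn F I φ1
  cadlag0 : ∀ ω, Cadlag I fun t => φ0 t ω
  cadlag1 : ∀ ω, Cadlag I fun t => φ1 t ω
  fv0 : ∀ ω, ∃ u d : ℝ → ℝ, Monotone u ∧ Monotone d ∧ ∀ t ∈ I, φ0 t ω = u t - d t
  up_mono : ∀ ω, Monotone fun t => up t ω
  dn_mono : ∀ ω, Monotone fun t => dn t ω
  up_rc : ∀ ω x, ContinuousWithinAt (fun t => up t ω) (Ici x) x
  dn_rc : ∀ ω x, ContinuousWithinAt (fun t => dn t ω) (Ici x) x
  jordan : ∀ ω, ∀ t ∈ I, φ1 t ω = b + up t ω - dn t ω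
  init : ∀ ω, φ0 0 ω - a ≤
    -(S 0 ω * max (φ1 0 ω - b) 0) + (1 - lam) * S 0 ω * max (-(φ1 0 ω - b)) 0
  selfFin : ∀ ω, ∀ s ∈ I, ∀ t ∈ I, s ≤ t →
    φ0 t ω - φ0 s ω ≤
      -(∫ u in Ioc s t, S u ω ∂(rsMeasure fun r => up r ω)) +
        (1 - lam) * ∫ u in Ioc s t, S u ω ∂(rsMeasure fun r => dn r ω)

/-- Admissibility: the liquidation value stays nonnegative. -/
def Strategy.Admissible {F : ℝ → MeasurableSpace Ω} {I : Set ℝ} {S : ℝ → Ω → ℝ}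
    {lam a b : ℝ} (str : Strategy F I S lam a b) : Prop :=
  ∀ ω, ∀ t ∈ I, 0 ≤ Vliq S lam str.φ0 str.φ1 t ω

/-- The set `C(x)` of attainable claims at time `T`. -/
def Cset (F : ℝ → MeasurableSpace Ω) (I : Set ℝ) (S : ℝ → Ω → ℝ) (lam x T : ℝ) :
    Set (Ω → ℝ) :=
  {g | ∃ str : Strategy F I S lam x 0, str.Admissible ∧
    g = fun ω => Vliq S lam str.φ0 str.φ1 T ω}

/-- A `mu`-consistent price system for the price process `S` with bid-ask spread
`[(1-mu)S, S]`. -/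
structure IsCPS (F : ℝ → MeasurableSpace Ω) (P : Measure Ω) (I : Set ℝ) (S : ℝ → Ω → ℝ)
    (mu : ℝ) (Z0 Z1 : ℝ → Ω → ℝ) : Prop where
  pos0 : ∀ t ∈ I, ∀ᵐ ω ∂P, 0 < Z0 t ω
  pos1 : ∀ t ∈ I, ∀ᵐ ω ∂P, 0 < Z1 t ω
  init : ∀ᵐ ω ∂P, Z0 0 ω = 1
  mart0 : MartOn F P I Z0
  locmart1 : LocMartOn F P I Z1
  bidask : ∀ t ∈ I, ∀ᵐ ω ∂P,
    (1 - mu) * S t ω ≤ Z1 t ω / Z0 t ω ∧ Z1 t ω / Z0 t ω ≤ S t ω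

/-- Weak (nonnegative) version of a consistent price system, with the bid-ask condition in
multiplicative form (so that `0/0` causes no harm). -/
structure IsCPSw (F : ℝ → MeasurableSpace Ω) (P : Measure Ω) (I : Set ℝ) (S : ℝ → Ω → ℝ)
    (mu : ℝ) (Z0 Z1 : ℝ → Ω → ℝ) : Prop where
  nonneg0 : ∀ t ∈ I, ∀ᵐ ω ∂P, 0 ≤ Z0 t ω
  nonneg1 : ∀ t ∈ I, ∀ᵐ ω ∂P, 0 ≤ Z1 t ω
  init : ∀ᵐ ω ∂P, Z0 0 ω = 1
  mart0 : MartOn F P I Z0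
  locmart1 : LocMartOn F P I Z1
  bidask : ∀ t ∈ I, ∀ᵐ ω ∂P,
    (1 - mu) * S t ω * Z0 t ω ≤ Z1 t ω ∧ Z1 t ω ≤ S t ω * Z0 t ω

/-- `Z = (Z0, Z1)` is a `lam`-consistent local martingale deflator (strict version):
there is a localizing sequence `σ` such that each stopped process is a `lam`-consistent
price system for the stopped price process. -/
def IsLocMartDeflator (F : ℝ → MeasurableSpace Ω) (P : Measure Ω) (I : Set ℝ)
    (S : ℝ → Ω → ℝ) (lam : ℝ) (Z0 Z1 : ℝ → Ω → ℝ) : Prop :=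
  ∃ σ : ℕ → Ω → ℝ, IsLocSeq F σ ∧
    ∀ n, IsCPS F P I (stopProc S (σ n)) lam (stopProc Z0 (σ n)) (stopProc Z1 (σ n))

/-- Nonnegative version of a `lam`-consistent local martingale deflator. -/
def IsLocMartDeflatorW (F : ℝ → MeasurableSpace Ω) (P : Measure Ω) (I : Set ℝ)
    (S : ℝ → Ω → ℝ) (lam : ℝ) (Z0 Z1 : ℝ → Ω → ℝ) : Prop :=
  ∃ σ : ℕ → Ω → ℝ, IsLocSeq F σ ∧
    ∀ n, IsCPSw F P I (stopProc S (σ n)) lam (stopProc Z0 (σ n)) (stopProc Z1 (σ n))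

/-- `S` satisfies `(CPS^mu)` locally. -/
def CPSLocal (F : ℝ → MeasurableSpace Ω) (P : Measure Ω) (I : Set ℝ) (S : ℝ → Ω → ℝ)
    (mu : ℝ) : Prop :=
  ∃ Z0 Z1 : ℝ → Ω → ℝ, IsLocMartDeflator F P I S mu Z0 Z1

/-- A (nonnegative) `lam`-consistent supermartingale deflator `(Y0, Y1)` with `Y0_0 = y`. -/
structure IsDeflator (F : ℝ → MeasurableSpace Ω) (P : Measure Ω) (I : Set ℝ)
    (S : ℝ → Ω → ℝ) (lam y : ℝ) (Y0 Y1 : ℝ → Ω → ℝ) : Prop where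
  nonneg0 : ∀ t ∈ I, ∀ᵐ ω ∂P, 0 ≤ Y0 t ω
  nonneg1 : ∀ t ∈ I, ∀ᵐ ω ∂P, 0 ≤ Y1 t ω
  init : ∀ᵐ ω ∂P, Y0 0 ω = y
  bidask : ∀ t ∈ I, ∀ᵐ ω ∂P,
    (1 - lam) * S t ω * Y0 t ω ≤ Y1 t ω ∧ Y1 t ω ≤ S t ω * Y0 t ω
  supermart : ∀ str : Strategy F I S lam 1 0, str.Admissible →
    SupermartOn F P I fun t ω => str.φ0 t ω * Y0 t ω + str.φ1 t ω * Y1 t ω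

/-- The set `D(y)` of terminal values of supermartingale deflators. -/
def Dset (F : ℝ → MeasurableSpace Ω) (P : Measure Ω) (I : Set ℝ) (S : ℝ → Ω → ℝ)
    (lam T y : ℝ) : Set (Ω → ℝ) :=
  {h | ∃ Y0 Y1 : ℝ → Ω → ℝ, IsDeflator F P I S lam y Y0 Y1 ∧ h = Y0 T}

/-- Coefficients of forward convex combinations: `a n` is supported on `[n, N n]`,
nonnegative, and sums to one. -/
def FwdCC (a : ℕ → ℕ → ℝ) (N : ℕ → ℕ) : Prop :=
  (∀ n k, 0 ≤ a n k) ∧ (∀ n k, k < n ∨ N n < k → a n k = 0) ∧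
    ∀ n, ∑ k ∈ Finset.Icc n (N n), a n k = 1

/-- A utility function on `(0,∞)`: increasing, strictly concave, smooth, satisfying the
Inada conditions and reasonable asymptotic elasticity. -/
structure IsUtility (U : ℝ → ℝ) : Prop where
  mono : StrictMonoOn U (Ioi 0)
  concave : StrictConcaveOn ℝ (Ioi 0) U
  smooth : ContDiffOn ℝ (⊤ : ℕ∞) U (Ioi 0)
  inada0 : Tendsto (deriv U) (nhdsWithin 0 (Ioi 0)) atTop
  inadaInf : Tendsto (deriv U) atTop (nhds 0)
  rae : limsup (fun x => x * deriv U x / U x) atTop < 1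

/-- The convex conjugate `V(y) = sup_{x>0} (U(x) - x y)`. -/
def conjU (U : ℝ → ℝ) (y : ℝ) : ℝ := sSup {r | ∃ x : ℝ, 0 < x ∧ r = U x - x * y}

/-- Extended-real-valued expected utility `E[U(X)]`, with the convention that a claim that
is `≤ 0` on a set of positive measure has expected utility `-∞`. -/
def eExpU (P : Measure Ω) (U : ℝ → ℝ) (X : Ω → ℝ) : EReal :=
  ((∫⁻ ω, (if X ω ≤ 0 then 0 else ENNReal.ofReal (U (X ω))) ∂P : ℝ≥0∞) : EReal) -
    ((∫⁻ ω, (if X ω ≤ 0 then ⊤ else ENNReal.ofReal (-U (X ω))) ∂P : ℝ≥0∞) : EReal)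

/-- Extended-real-valued expected dual utility `E[V(Y)]` for the conjugate `V` of `U`. -/
def eExpV (P : Measure Ω) (U : ℝ → ℝ) (Y : Ω → ℝ) : EReal :=
  ((∫⁻ ω, (if Y ω ≤ 0 then ⊤ else ENNReal.ofReal (conjU U (Y ω))) ∂P : ℝ≥0∞) : EReal) -
    ((∫⁻ ω, (if Y ω ≤ 0 then 0 else ENNReal.ofReal (-conjU U (Y ω))) ∂P : ℝ≥0∞) : EReal)

/-- Primal value function `u(x)`. -/
def uE (F : ℝ → MeasurableSpace Ω) (P : Measure Ω) (I : Set ℝ) (S : ℝ → Ω → ℝ)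
    (lam T : ℝ) (U : ℝ → ℝ) (x : ℝ) : EReal :=
  sSup {r : EReal | ∃ g ∈ Cset F I S lam x T, r = eExpU P U g}

/-- Dual value function `v(y)`. -/
def vE (F : ℝ → MeasurableSpace Ω) (P : Measure Ω) (I : Set ℝ) (S : ℝ → Ω → ℝ)
    (lam T : ℝ) (U : ℝ → ℝ) (y : ℝ) : EReal :=
  sInf {r : EReal | ∃ h ∈ Dset F P I S lam T y, r = eExpV P U h}

/-- Standard Brownian motion starting at `0`: continuous paths, Gaussian increments,
independent increments. -/
structure IsStdBM (P : Measure Ω) (B : ℝ → Ω → ℝ) : Prop where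
  init : ∀ ω, B 0 ω = 0
  cont : ∀ ω, Continuous fun t => B t ω
  meas : ∀ t, Measurable (B t)
  law : ∀ s t : ℝ, 0 ≤ s → s ≤ t →
    Measure.map (fun ω => B t ω - B s ω) P = ProbabilityTheory.gaussianReal 0 ((t - s).toNNReal)
  indep : ∀ (n : ℕ) (t : ℕ → ℝ), Monotone t → (∀ i, 0 ≤ t i) →
    ProbabilityTheory.iIndepFun
      (fun i : Fin n => fun ω => B (t ((i : ℕ) + 1)) ω - B (t (i : ℕ)) ω) P

/-- A filtration (family of σ-algebras) compatible with the Brownian motion `B`: it is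
monotone, `B` is adapted, and increments after `s` are independent of `F s`.  The
`P`-augmented natural filtration of `B` is an example. -/
structure IsBMFiltration (P : Measure Ω) (B : ℝ → Ω → ℝ) (F : ℝ → MeasurableSpace Ω) :
    Prop where
  mono : Monotone F
  le : ∀ t, F t ≤ (inferInstance : MeasurableSpace Ω)
  adapted : ∀ t, Measurable[F t] (B t)
  indep : ∀ s t : ℝ, 0 ≤ s → s ≤ t →
    ProbabilityTheory.Indep
      (MeasurableSpace.comap (fun ω => B t ω - B s ω) inferInstance) (F s) P

/-- `W^w_t = w + B_t - t`. -/
def Wdrift (B : ℝ → Ω → ℝ) (w t : ℝ) (ω : Ω) : ℝ := w + B t ω - t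

/-- First time `W^w` hits `(-∞, c]` (after time 0). -/
def hitTime (B : ℝ → Ω → ℝ) (w c : ℝ) (ω : Ω) : ℝ :=
  sInf {t : ℝ | 0 < t ∧ Wdrift B w t ω ≤ c}

/-- `τ^w`, the first time `W^w` hits `(-∞, 0]`. -/
def hitT (B : ℝ → Ω → ℝ) (w : ℝ) (ω : Ω) : ℝ := hitTime B w 0 ω

/-- The price process `S^w_t = e^{t ∧ τ^w}`. -/
def Sproc (B : ℝ → Ω → ℝ) (w : ℝ) : ℝ → Ω → ℝ :=
  fun t ω => Real.exp (min t (hitT B w ω))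

/-- The density of the inverse Gaussian law of the first passage time of `B_t - t`
at level `w` (the law of `τ^w`). -/
def igDensity (w t : ℝ) : ℝ :=
  if 0 < t then w / Real.sqrt (2 * Real.pi * t ^ 3) * Real.exp (-((t - w) ^ 2) / (2 * t))
  else 0

/-- The leverage process of a strategy. -/
def Lev (S : ℝ → Ω → ℝ) (φ0 φ1 : ℝ → Ω → ℝ) (t : ℝ) (ω : Ω) : ℝ :=
  φ1 t ω * S t ω / (φ0 t ω + φ1 t ω * S t ω)

/-- Value of the log-utility maximization problem for `S^w` under transaction costs `lam`,
over admissible strategies starting from the endowment `(a, b)`, with terminal time `τ^w`. -/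
def logVal (F : ℝ → MeasurableSpace Ω) (P : Measure Ω) (B : ℝ → Ω → ℝ)
    (lam w a b : ℝ) : EReal :=
  sSup {r : EReal | ∃ str : Strategy F (Ici 0) (Sproc B w) lam a b, str.Admissible ∧
    r = eExpU P Real.log fun ω => Vliq (Sproc B w) lam str.φ0 str.φ1 (hitT B w ω) ω}

/-- `str` is an optimizer of the log-utility maximization problem for `S^w`. -/
def IsLogOptimal (F : ℝ → MeasurableSpace Ω) (P : Measure Ω) (B : ℝ → Ω → ℝ)
    (lam w a b : ℝ) (str : Strategy F (Ici 0) (Sproc B w) lam a b) : Prop :=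
  str.Admissible ∧
    eExpU P Real.log (fun ω => Vliq (Sproc B w) lam str.φ0 str.φ1 (hitT B w ω) ω) =
      logVal F P B lam w a b

/-- Dual value of the log-utility maximization problem for `S^w`. -/
def dualLogVal (F : ℝ → MeasurableSpace Ω) (P : Measure Ω) (B : ℝ → Ω → ℝ)
    (lam w y : ℝ) : EReal :=
  sInf {r : EReal | ∃ Y0 Y1 : ℝ → Ω → ℝ,
    IsDeflator F P (Ici 0) (Sproc B w) lam y Y0 Y1 ∧
      r = eExpV P Real.log fun ω => Y0 (hitT B w ω) ω}

/-- The value function `v(l, w)` of Lemma A.3. -/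
def vlw (F : ℝ → MeasurableSpace Ω) (P : Measure Ω) (B : ℝ → Ω → ℝ)
    (lam l w : ℝ) : EReal :=
  logVal F P B lam w (1 - l) l

/-- The critical leverage function `ℓ(w)`. -/
def ellF (F : ℝ → MeasurableSpace Ω) (P : Measure Ω) (B : ℝ → Ω → ℝ)
    (lam w : ℝ) : ℝ :=
  sSup {l : ℝ | l ∈ Icc 0 (1 / lam) ∧ vlw F P B lam l w = vlw F P B lam 0 w}

/-- The σ-algebra `F_σ` associated to a stopping time `σ`. -/
def stopSigma (F : ℝ → MeasurableSpace Ω) (σ : Ω → ℝ) : MeasurableSpace Ω :=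
  MeasurableSpace.generateFrom {A | ∀ t : ℝ, MeasurableSet[F t] (A ∩ {ω | σ ω ≤ t})}

/-- The natural σ-algebra generated by a process up to time `t`. -/
def natF (S : ℝ → Ω → ℝ) (t : ℝ) : MeasurableSpace Ω :=
  ⨆ s ∈ Icc (0 : ℝ) t, MeasurableSpace.comap (S s) inferInstance

/-- The `P`-augmented natural filtration of the process `S`. -/
def augF (P : Measure Ω) (S : ℝ → Ω → ℝ) (t : ℝ) : MeasurableSpace Ω :=
  natF S t ⊔ MeasurableSpace.generateFrom {A | MeasurableSet A ∧ P A = 0}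

/-- The exponential law with rate `r` on `ℝ`. -/
def expLaw (r : ℝ) : Measure ℝ :=
  MeasureTheory.volume.withDensity fun x =>
    ENNReal.ofReal (if 0 ≤ x then r * Real.exp (-(r * x)) else 0)

section StickyAux

lemma mspace_le_apply {Ω : Type*} {m₁ m₂ : MeasurableSpace Ω} (h : m₁ ≤ m₂)
    {s : Set Ω} (hs : MeasurableSet[m₁] s) : MeasurableSet[m₂] s :=
  (MeasurableSpace.le_def.1 h) s hs

lemma stopTE_lt_meas {Ω : Type*} [MeasurableSpace Ω] {F : ℝ → MeasurableSpace Ω}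
    (hmono : Monotone F) {σ : Ω → EReal} (hσ : IsStopTE F σ) {c r : ℝ} (hcr : c ≤ r) :
    MeasurableSet[F r] {ω | σ ω < (c : EReal)} := by
  have hset : {ω | σ ω < (c : EReal)} =
      ⋃ (p : ℚ) (_ : (p : ℝ) < c), {ω | σ ω ≤ (((p : ℝ)) : EReal)} := by
    ext ω
    simp only [Set.mem_setOf_eq, Set.mem_iUnion]
    constructor
    · intro h
      obtain ⟨p, h1, h2⟩ := EReal.exists_rat_btwn_of_lt h
      exact ⟨p, EReal.coe_lt_coe_iff.1 h2, h1.le⟩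
    · rintro ⟨p, h1, h2⟩
      exact h2.trans_lt (EReal.coe_lt_coe_iff.2 h1)
  rw [hset]
  refine MeasurableSet.iUnion fun p => MeasurableSet.iUnion fun hp => ?_
  exact mspace_le_apply (hmono (le_of_lt (lt_of_lt_of_le hp hcr))) (hσ (p : ℝ))

/-- If the drifted BM is nonpositive at a positive time `u`, then `hitT ≤ u`. -/
lemma hitT_le {Ω : Type*} [MeasurableSpace Ω] {B : ℝ → Ω → ℝ} {w : ℝ} {ω : Ω} {u : ℝ}
    (hu : 0 < u) (hW : Wdrift B w u ω ≤ 0) : hitT B w ω ≤ u := by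
  refine csInf_le ⟨0, fun t ht => ht.1.le⟩ ⟨hu, hW⟩

/-- Main stickiness estimate, part (i). -/
lemma sticky_main
    {Ω : Type*} [MeasurableSpace Ω] (P : Measure Ω) [IsProbabilityMeasure P]
    (B : ℝ → Ω → ℝ) (hB : IsStdBM P B)
    (F : ℝ → MeasurableSpace Ω) (hF : IsBMFiltration P B F)
    (w : ℝ) (hw : 0 < w)
    (δ : ℝ) (hδ : 0 < δ) (σ : Ω → EReal) (hσ : IsStopTE F σ) (hσ0 : ∀ ω, 0 ≤ σ ω)
    (hpos : 0 < P {ω | σ ω < ((hitT B w ω : ℝ) : EReal)}) :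
    0 < P {ω | σ ω < ((hitT B w ω : ℝ) : EReal) ∧
      hitT B w ω - (σ ω).toReal < δ} := by
  classical
  set W : ℝ → Ω → ℝ := fun t ω => Wdrift B w t ω with hWdef
  have hWc : ∀ ω, Continuous fun t => W t ω := by
    intro ω
    show Continuous fun t => w + B t ω - t
    exact (continuous_const.add (hB.cont ω)).sub continuous_id
  -- the good events
  set G : ℚ → ℚ → ℕ → ℕ → Set Ω := fun q r m k =>
    {ω | 0 ≤ (q : ℝ) ∧ (q : ℝ) < (r : ℝ)} ∩ {ω | σ ω ≤ (((q : ℝ)) : EReal)} ∩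
      {ω | ((((r : ℝ) - δ / 2 : ℝ)) : EReal) ≤ σ ω} ∩
      {ω | W (r : ℝ) ω ≤ (m : ℝ)} ∩
      (⋂ (t : ℚ) (_ : 0 < (t : ℝ)) (_ : (t : ℝ) ≤ (r : ℝ)),
        {ω | 1 / ((k : ℝ) + 1) ≤ W (t : ℝ) ω}) ∩
      {ω | 1 / ((k : ℝ) + 1) ≤ W (r : ℝ) ω} with hGdef
  -- covering
  have hcover : {ω | σ ω < ((hitT B w ω : ℝ) : EReal)} ⊆
      ⋃ (q : ℚ) (r : ℚ) (m : ℕ) (k : ℕ), G q r m k := by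
    intro ω hω
    simp only [Set.mem_setOf_eq] at hω
    set b := hitT B w ω with hb
    have htop : σ ω ≠ ⊤ := ne_top_of_lt hω
    have hbot : σ ω ≠ ⊥ := ne_bot_of_le_ne_bot (by simp) (hσ0 ω)
    set a := (σ ω).toReal with ha
    have hacoe : ((a : ℝ) : EReal) = σ ω := EReal.coe_toReal htop hbot
    have ha0 : 0 ≤ a := by
      have := EReal.toReal_le_toReal (hσ0 ω) (by simp) htop
      simpa using this
    have hab : a < b := by
      rw [← hacoe] at hω
      exact_mod_cast hω
    obtain ⟨q, hq1, hq2⟩ := exists_rat_btwn (show a < min b (a + δ / 4) by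
      exact lt_min hab (by linarith))
    obtain ⟨r, hr1, hr2⟩ := exists_rat_btwn (show (q : ℝ) < min b (a + δ / 2) by
      refine lt_min ((lt_min_iff.1 hq2).1) ?_
      have := (lt_min_iff.1 hq2).2
      linarith)
    have hq0 : 0 ≤ (q : ℝ) := le_of_lt (lt_of_le_of_lt ha0 hq1)
    have hrb : (r : ℝ) < b := (lt_min_iff.1 hr2).1
    have hra : (r : ℝ) < a + δ / 2 := (lt_min_iff.1 hr2).2
    -- positivity of W on [0, r]
    have hWpos : ∀ u : ℝ, 0 ≤ u → u ≤ (r : ℝ) → 0 < W u ω := by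
      intro u hu0 hur
      rcases eq_or_lt_of_le hu0 with h0 | h0
      · show (0:ℝ) < w + B u ω - u
        rw [← h0, hB.init ω]
        simpa using hw
      · by_contra hle
        push_neg at hle
        have : hitT B w ω ≤ u := hitT_le h0 hle
        have : b ≤ (r : ℝ) := hb ▸ this.trans hur
        exact absurd hrb (not_lt.2 this)
    -- minimum on the compact interval
    obtain ⟨x, hx, hxmin⟩ := isCompact_Icc.exists_isMinOn
      (Set.nonempty_Icc.2 (le_of_lt (lt_of_le_of_lt hq0 hr1)))
      ((hWc ω).continuousOn : ContinuousOn (fun t => W t ω) (Set.Icc 0 (r : ℝ)))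
    have hxpos : 0 < W x ω := hWpos x hx.1 hx.2
    obtain ⟨k, hk⟩ := exists_nat_one_div_lt hxpos
    obtain ⟨m, hm⟩ := exists_nat_ge (W (r : ℝ) ω)
    have hmem : ω ∈ G q r m k := by
      refine ⟨⟨⟨⟨⟨⟨hq0, hr1⟩, ?_⟩, ?_⟩, hm⟩, ?_⟩, ?_⟩
      · show σ ω ≤ (((q : ℝ)) : EReal)
        rw [← hacoe]
        exact_mod_cast hq1.le
      · show ((((r : ℝ) - δ / 2 : ℝ)) : EReal) ≤ σ ω
        rw [← hacoe]
        exact_mod_cast (by linarith : (r : ℝ) - δ / 2 ≤ a)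
      · refine Set.mem_iInter.2 fun t => Set.mem_iInter.2 fun ht => Set.mem_iInter.2 fun htr => ?_
        have := isMinOn_iff.1 hxmin (t : ℝ) ⟨ht.le, htr⟩
        exact le_trans hk.le this
      · exact le_trans hk.le (isMinOn_iff.1 hxmin (r : ℝ)
          ⟨hq0.trans hr1.le, le_refl _⟩)
    exact Set.mem_iUnion.2 ⟨q, Set.mem_iUnion.2 ⟨r, Set.mem_iUnion.2 ⟨m,
      Set.mem_iUnion.2 ⟨k, hmem⟩⟩⟩⟩
  -- find a tuple with positive probability
  have hex : ∃ q r m k, P (G q r m k) ≠ 0 := by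
    by_contra hc
    push_neg at hc
    have : P (⋃ (q : ℚ) (r : ℚ) (m : ℕ) (k : ℕ), G q r m k) = 0 :=
      measure_iUnion_null fun q => measure_iUnion_null fun r =>
        measure_iUnion_null fun m => measure_iUnion_null fun k => hc q r m k
    have hle := (measure_mono hcover).trans_eq this
    exact absurd (lt_of_lt_of_le hpos hle) (lt_irrefl _)
  obtain ⟨q, r, m, k, hGne⟩ := hex
  obtain ⟨ω0, hω0⟩ := nonempty_of_measure_ne_zero hGne
  have hq0 : 0 ≤ (q : ℝ) := hω0.1.1.1.1.1.1
  have hqr : (q : ℝ) < (r : ℝ) := hω0.1.1.1.1.1.2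
  set r' : ℝ := (r : ℝ) with hr'
  set t' : ℝ := r' + δ / 4 with ht'
  have hr'0 : 0 ≤ r' := hq0.trans hqr.le
  set c : ℝ := -((m : ℝ) + 1) with hcdef
  set E : Set Ω := (fun ω => B t' ω - B r' ω) ⁻¹' Set.Iic c with hEdef
  -- measurability of `G q r m k` w.r.t. `F r'`
  have hGmeas : MeasurableSet[F r'] (G q r m k) := by
    refine MeasurableSet.inter (MeasurableSet.inter (MeasurableSet.inter
      (MeasurableSet.inter (MeasurableSet.inter ?_ ?_) ?_) ?_) ?_) ?_
    · exact MeasurableSet.const _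
    · exact mspace_le_apply (hF.mono hqr.le) (hσ (q : ℝ))
    · have hset : {ω | ((((r : ℝ) - δ / 2 : ℝ)) : EReal) ≤ σ ω} =
          {ω | σ ω < (((r : ℝ) - δ / 2 : ℝ) : EReal)}ᶜ := by
        ext ω; simp [not_lt]
      rw [hset]
      exact (stopTE_lt_meas hF.mono hσ (by linarith : (r : ℝ) - δ / 2 ≤ r')).compl
    · exact ((measurable_const.add (hF.adapted r')).sub measurable_const) measurableSet_Iic
    · refine MeasurableSet.iInter fun t => MeasurableSet.iInter fun ht =>
        MeasurableSet.iInter fun htr => ?_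
      have hmt : Measurable[F (t : ℝ)] fun ω => w + B (t : ℝ) ω - (t : ℝ) :=
        (measurable_const.add (hF.adapted (t : ℝ))).sub measurable_const
      exact mspace_le_apply (hF.mono htr) (hmt measurableSet_Ici)
    · exact ((measurable_const.add (hF.adapted r')).sub measurable_const) measurableSet_Ici
  -- independence
  have hind := hF.indep r' t' hr'0 (by rw [ht']; linarith)
  have hEmem : MeasurableSet[MeasurableSpace.comap (fun ω => B t' ω - B r' ω)
      inferInstance] E := ⟨Set.Iic c, measurableSet_Iic, rfl⟩
  have hmul : P (E ∩ G q r m k) = P E * P (G q r m k) :=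
    (hind.indepSet_of_measurableSet hEmem hGmeas).measure_inter_eq_mul
  -- positivity of `P E`
  have hincmeas : Measurable fun ω => B t' ω - B r' ω := (hB.meas t').sub (hB.meas r')
  have hmap := hB.law r' t' hr'0 (by rw [ht']; linarith)
  have hPE : P E = ProbabilityTheory.gaussianReal 0 ((t' - r').toNNReal) (Set.Iic c) := by
    rw [← hmap, Measure.map_apply hincmeas measurableSet_Iic]
  have hv : ((t' - r').toNNReal) ≠ 0 := by
    have h1 : (0 : ℝ) < t' - r' := by rw [ht']; linarith
    exact (Real.toNNReal_pos.2 h1).ne'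
  have hPEpos : P E ≠ 0 := by
    rw [hPE, ProbabilityTheory.gaussianReal_apply 0 hv]
    intro h0
    have h1 := (lintegral_eq_zero_iff (ProbabilityTheory.measurable_gaussianPDF 0 _)).1 h0
    have h2 : ∀ᵐ x ∂(volume.restrict (Set.Iic c)), False := by
      refine h1.mono fun x hx => ?_
      exact absurd hx (ProbabilityTheory.gaussianPDF_pos 0 hv x).ne'
    have h3 : (volume.restrict (Set.Iic c)) Set.univ = 0 := by
      have := ae_iff.1 h2
      simpa using this
    rw [Measure.restrict_apply_univ, Real.volume_Iic] at h3
    exact absurd h3 (by simp)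
  -- the inclusion into the target event
  have hsub : E ∩ G q r m k ⊆ {ω | σ ω < ((hitT B w ω : ℝ) : EReal) ∧
      hitT B w ω - (σ ω).toReal < δ} := by
    rintro ω ⟨hEω, hGω⟩
    obtain ⟨⟨⟨⟨⟨-, hσq⟩, hσr⟩, hWr⟩, hall⟩, hWrk⟩ := hGω
    simp only [Set.mem_iInter, Set.mem_setOf_eq] at hall hσq hσr hWr hWrk
    have hc0 : (0 : ℝ) < 1 / ((k : ℝ) + 1) := by positivity
    have hWu : ∀ u : ℝ, 0 < u → u ≤ r' → 1 / ((k : ℝ) + 1) ≤ W u ω := by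
      intro u hu hur
      rcases eq_or_lt_of_le hur with he | hlt
      · rw [he]; exact hWrk
      · by_contra hle
        push_neg at hle
        have hev : ∀ᶠ t in 𝓝 u, W t ω < 1 / ((k : ℝ) + 1) :=
          ((hWc ω).continuousAt).eventually_lt_const hle
        obtain ⟨η, hη, hball⟩ := Metric.eventually_nhds_iff.1 hev
        obtain ⟨p, hp1, hp2⟩ := exists_rat_btwn (show max (u - η) 0 < u from
          max_lt (by linarith) hu)
        have hp0 : 0 < (p : ℝ) := lt_of_le_of_lt (le_max_right _ _) hp1
        have hpr : (p : ℝ) ≤ r' := le_of_lt (lt_of_lt_of_le hp2 hlt.le)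
        have hp1' : u - η < (p : ℝ) := lt_of_le_of_lt (le_max_left _ _) hp1
        have hdist : dist (p : ℝ) u < η := by
          rw [Real.dist_eq, abs_sub_lt_iff]
          exact ⟨by linarith, by linarith⟩
        exact absurd (hall p hp0 hpr) (not_le.2 (hball hdist))
    have hEω' : B t' ω - B r' ω ≤ c := hEω
    have hWneg : W t' ω < 0 := by
      show w + B t' ω - t' < 0
      have hWr' : w + B r' ω - r' ≤ (m : ℝ) := hWr
      rw [ht', hcdef] at *
      linarith
    have hS : 0 < t' ∧ Wdrift B w t' ω ≤ 0 := ⟨by rw [ht']; linarith, hWneg.le⟩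
    have hτle : hitT B w ω ≤ t' := hitT_le hS.1 hS.2
    have hτge : r' ≤ hitT B w ω := by
      show r' ≤ sInf {t | 0 < t ∧ Wdrift B w t ω ≤ 0}
      refine le_csInf ⟨t', hS⟩ fun s hs => ?_
      by_contra hsr
      push_neg at hsr
      have h1 : 1 / ((k : ℝ) + 1) ≤ Wdrift B w s ω := hWu s hs.1 hsr.le
      have h2 : Wdrift B w s ω ≤ 0 := hs.2
      linarith
    have hqτ : (((q : ℝ)) : EReal) < ((hitT B w ω : ℝ) : EReal) := by
      exact_mod_cast lt_of_lt_of_le hqr hτge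
    have hστ : σ ω < ((hitT B w ω : ℝ) : EReal) := lt_of_le_of_lt hσq hqτ
    have htop : σ ω ≠ ⊤ := ne_top_of_le_ne_top (by simp) hσq
    have hbot : σ ω ≠ ⊥ := ne_bot_of_le_ne_bot (by simp) (hσ0 ω)
    have hacoe : (((σ ω).toReal : ℝ) : EReal) = σ ω := EReal.coe_toReal htop hbot
    have haR : r' - δ / 2 ≤ (σ ω).toReal := by
      rw [← hacoe] at hσr
      exact_mod_cast hσr
    refine ⟨hστ, ?_⟩
    rw [ht'] at hτle
    linarith
  have hEG : 0 < P (E ∩ G q r m k) := by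
    rw [hmul]
    exact ENNReal.mul_pos hPEpos hGne
  exact lt_of_lt_of_le hEG (measure_mono hsub)

end StickyAux

/-- stickiness, Proposition 4.1 (i): for every `δ > 0` and every
stopping time `σ` with `P[σ < τ^w] > 0` one has `P[σ < τ^w, τ^w - σ < δ] > 0`;
consequently `S^w` satisfies Guasoni's stickiness property. -/
theorem statement_11
    {Ω : Type*} [MeasurableSpace Ω] (P : Measure Ω) [IsProbabilityMeasure P]
    (B : ℝ → Ω → ℝ) (hB : IsStdBM P B)
    (F : ℝ → MeasurableSpace Ω) (hF : IsBMFiltration P B F)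
    (w : ℝ) (hw : 0 < w) :
    (∀ δ : ℝ, 0 < δ → ∀ σ : Ω → EReal, IsStopTE F σ → (∀ ω, 0 ≤ σ ω) →
      0 < P {ω | σ ω < ((hitT B w ω : ℝ) : EReal)} →
      0 < P {ω | σ ω < ((hitT B w ω : ℝ) : EReal) ∧
        hitT B w ω - (σ ω).toReal < δ}) ∧
    (∀ ε : ℝ, 0 < ε → ∀ σ : Ω → EReal, IsStopTE F σ → (∀ ω, 0 ≤ σ ω) →
      0 < P {ω | σ ω < ⊤} →
      0 < P {ω | σ ω < ⊤ ∧ ∀ t : ℝ, (σ ω).toReal ≤ t →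
        Sproc B w ((σ ω).toReal) ω / (1 + ε) ≤ Sproc B w t ω ∧
          Sproc B w t ω ≤ (1 + ε) * Sproc B w ((σ ω).toReal) ω}) := by
  constructor
  · intro δ hδ σ hσ hσ0 hpos
    exact sticky_main P B hB F hF w hw δ hδ σ hσ hσ0 hpos
  · intro ε hε σ hσ hσ0 hpos
    set δ := Real.log (1 + ε) with hδdef
    have hδ : 0 < δ := Real.log_pos (by linarith)
    have corridor : {ω | σ ω < ⊤ ∧ hitT B w ω - (σ ω).toReal < δ} ⊆
        {ω | σ ω < ⊤ ∧ ∀ t : ℝ, (σ ω).toReal ≤ t →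
          Sproc B w ((σ ω).toReal) ω / (1 + ε) ≤ Sproc B w t ω ∧
            Sproc B w t ω ≤ (1 + ε) * Sproc B w ((σ ω).toReal) ω} := by
      rintro ω ⟨h1, h2⟩
      refine ⟨h1, fun t ht => ?_⟩
      simp only [Sproc]
      set a := (σ ω).toReal with ha
      set b := hitT B w ω with hb
      have hmono : Real.exp (min a b) ≤ Real.exp (min t b) :=
        Real.exp_le_exp.2 (min_le_min ht (le_refl b))
      constructor
      · calc Real.exp (min a b) / (1 + ε)
            ≤ Real.exp (min a b) := div_le_self (Real.exp_pos _).le (by linarith)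
          _ ≤ Real.exp (min t b) := hmono
      · rcases le_or_gt b a with hba | hab
        · have heq : min t b = min a b := by
            rw [min_eq_right (hba.trans ht), min_eq_right hba]
          rw [heq]
          exact le_mul_of_one_le_left (Real.exp_pos _).le (by linarith)
        · have h3 : min a b = a := min_eq_left hab.le
          have h5 : Real.exp (min t b) ≤ Real.exp b := Real.exp_le_exp.2 (min_le_right _ _)
          have h6 : Real.exp b ≤ (1 + ε) * Real.exp a := by
            have hb' : b ≤ a + δ := by linarith
            calc Real.exp b ≤ Real.exp (a + δ) := Real.exp_le_exp.2 hb'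
              _ = Real.exp a * (1 + ε) := by
                  rw [Real.exp_add, hδdef, Real.exp_log (by linarith)]
              _ = (1 + ε) * Real.exp a := mul_comm _ _
          rw [h3]
          exact h5.trans h6
    rcases eq_or_ne (P {ω | σ ω < ((hitT B w ω : ℝ) : EReal)}) 0 with hA2' | hA2ne
    case inr =>
      have hA2 : 0 < P {ω | σ ω < ((hitT B w ω : ℝ) : EReal)} := pos_iff_ne_zero.2 hA2ne
      have hmain := sticky_main P B hB F hF w hw δ hδ σ hσ hσ0 hA2
      refine lt_of_lt_of_le hmain (le_trans (measure_mono ?_) (measure_mono corridor))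
      rintro ω ⟨h1, h2⟩
      exact ⟨h1.trans (EReal.coe_lt_top _), h2⟩
    case inl =>
      have hsplit : {ω | σ ω < ⊤} ⊆
          {ω | σ ω < ⊤ ∧ hitT B w ω - (σ ω).toReal < δ} ∪
            {ω | σ ω < ((hitT B w ω : ℝ) : EReal)} := by
        intro ω hω
        simp only [Set.mem_setOf_eq] at hω
        rcases lt_or_ge ((σ ω).toReal) (hitT B w ω) with h | h
        · right
          have htop := ne_of_lt hω
          have hbot : σ ω ≠ ⊥ := ne_bot_of_le_ne_bot (by simp) (hσ0 ω)
          have hcoe := EReal.coe_toReal htop hbot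
          show σ ω < ((hitT B w ω : ℝ) : EReal)
          rw [← hcoe]
          exact_mod_cast h
        · left
          exact ⟨hω, by linarith⟩
      have hle := (measure_mono hsplit).trans (measure_union_le (μ := P) _ _)
      rw [hA2', add_zero] at hle
      exact lt_of_lt_of_le (lt_of_lt_of_le hpos hle) (measure_mono corridor)

end CSY
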